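/- arXiv:1601.06311 — 5 statements merged into one kernel-verified Lean document; each statement's English description precedes it below -/
import Mathlib

section
/- For any graph G on n vertices and any edge e not in E(G), the symmetric difference of the set of maximal cliques of G and the set of maximal cliques of G+e has size at most 3·f(n-2), where f(k) is the maximum number of maximal cliques in a graph on k vertices. -/
open SimpleGraph

/-- `s` is a maximal clique of the simple graph `G`. -/
def MaxClique {V : Type*} (G : SimpleGraph V) (s : Set V) : Prop :=
  G.IsClique s ∧ ∀ t : Set V, G.IsClique t → s ⊆ t → s = t

/-- The graph obtained from `G` by adding the edge `(u,v)`. -/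
def addEdge {V : Type*} (G : SimpleGraph V) (u v : V) : SimpleGraph V :=
  G ⊔ SimpleGraph.fromEdgeSet {s(u, v)}

/-- The graph obtained from `G` by adding the set of edges `H`. -/
def addEdges {V : Type*} (G : SimpleGraph V) (H : Set (Sym2 V)) : SimpleGraph V :=
  G ⊔ SimpleGraph.fromEdgeSet H

/-- The number of maximal cliques of `G`. -/
noncomputable def numMaxCliques {V : Type*} (G : SimpleGraph V) : ℕ :=
  Nat.card {s : Set V // MaxClique G s}

/-- `f k`: the maximum possible number of maximal cliques in a graph on `k` vertices. -/
noncomputable def maxNumMaxCliques (k : ℕ) : ℕ :=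
  sSup {m | ∃ G : SimpleGraph (Fin k), m = numMaxCliques G}

/-!
A maximal clique of `G + uv` that is not maximal in `G` contains both `u` and `v`; a maximal
clique of `G` that is not maximal in `G + uv` extends by one endpoint and contains the other. In
each of these three cases, deleting the endpoints it contains leaves a maximal clique of the graph
induced on a common neighbourhood of `u` and `v`, and the clique is recovered from it. That
neighbourhood has at most `n - 2` vertices, and `f` is nondecreasing (pad with isolated
vertices), so each case contributes at most `f (n - 2)` cliques.
-/

lemma maxClique_iff_maximal {V : Type*} {G : SimpleGraph V} {s : Set V} :
    MaxClique G s ↔ Maximal G.IsClique s :=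
  and_congr_right' <| forall₂_congr fun _ _ =>
    ⟨fun h hst => (h hst).ge, fun h hst => hst.antisymm (h hst)⟩

lemma exists_maxClique {V : Type*} [Finite V] (G : SimpleGraph V) : ∃ s, MaxClique G s := by
  obtain ⟨s, -, hs⟩ := Finite.exists_le_maximal G.isClique_empty
  exact ⟨s, maxClique_iff_maximal.2 hs⟩

section Map
variable {W X : Type*} (f : W ↪ X)

lemma MaxClique.image_map {H : SimpleGraph W} {T : Set W} (hT : MaxClique H T)
    (hT_ne : T.Nonempty) :
    MaxClique (H.map f) (f '' T) := by
  refine ⟨isClique_map_image_iff.2 hT.1, fun t ht hsub => ?_⟩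
  obtain ⟨a, ha⟩ := hT_ne
  -- every vertex of `t` is `f a` or adjacent to it, hence in the range of `f`
  have ht_range : t ⊆ Set.range f := by
    intro x hx
    by_cases hxa : x = f a
    · exact hxa ▸ Set.mem_range_self a
    obtain ⟨b, -, -, rfl, -⟩ := (map_adj f H x (f a)).1 (ht hx (hsub ⟨a, ha, rfl⟩) hxa)
    exact Set.mem_range_self b
  have hpre : T = f ⁻¹' t := by
    refine hT.2 _ ?_ fun b hb => hsub ⟨b, hb, rfl⟩
    rwa [← isClique_map_image_iff (f := f), Set.image_preimage_eq_of_subset ht_range]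
  rw [hpre, Set.image_preimage_eq_of_subset ht_range]

lemma numMaxCliques_le_numMaxCliques_map [Finite X] (H : SimpleGraph W) :
    numMaxCliques H ≤ numMaxCliques (H.map f) := by
  have : Finite W := .of_injective f f.injective
  rcases isEmpty_or_nonempty W with hW | ⟨⟨a⟩⟩
  · obtain ⟨s, hs⟩ := exists_maxClique (H.map f)
    have : Nonempty {s : Set X // MaxClique (H.map f) s} := ⟨⟨s, hs⟩⟩
    calc numMaxCliques H ≤ 1 := Finite.card_le_one_iff_subsingleton.2 inferInstance
      _ ≤ numMaxCliques (H.map f) := Nat.card_pos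
  · have hne : ∀ T, MaxClique H T → T.Nonempty := fun T hT => by
      by_contra h
      rw [Set.not_nonempty_iff_eq_empty] at h
      subst h
      exact Set.singleton_ne_empty a (hT.2 {a} (isClique_singleton a) (Set.empty_subset _)).symm
    refine Nat.card_le_card_of_injective (fun T => ⟨f '' T.1, T.2.image_map f (hne _ T.2)⟩) ?_
    intro T T' h
    exact Subtype.ext (Set.image_injective.2 f.injective (congrArg Subtype.val h))

end Map

lemma numMaxCliques_le_maxNumMaxCliques {W : Type*} [Finite W] (H : SimpleGraph W) {k : ℕ}
    (hk : Nat.card W ≤ k) : numMaxCliques H ≤ maxNumMaxCliques k := by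
  have := Fintype.ofFinite W
  obtain ⟨e⟩ : Nonempty (W ↪ Fin k) :=
    Function.Embedding.nonempty_of_card_le (by simpa [Nat.card_eq_fintype_card] using hk)
  have hbdd : BddAbove {m | ∃ G : SimpleGraph (Fin k), m = numMaxCliques G} := by
    refine ⟨Nat.card (Set (Fin k)), ?_⟩
    rintro m ⟨G, rfl⟩
    exact Nat.card_le_card_of_injective Subtype.val Subtype.val_injective
  exact (numMaxCliques_le_numMaxCliques_map e H).trans (le_csSup hbdd ⟨_, rfl⟩)

section Restrict
variable {V : Type*} {G : SimpleGraph V} {S W : Set V}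

lemma MaxClique.preimage_val_induce (hW : ∀ x ∈ W, ∀ y ∈ S, G.Adj y x) {s : Set V}
    (hs : MaxClique G s) (hsW : s \ S ⊆ W) :
    MaxClique (G.induce W) (Subtype.val ⁻¹' s) := by
  refine ⟨isClique_induce_iff.2 (hs.1.subset (Set.image_preimage_subset _ _)), fun t ht hst => ?_⟩
  rw [isClique_induce_iff] at ht
  have hunion : G.IsClique (s ∪ Subtype.val '' t) := by
    have : Std.Symm G.Adj := ⟨fun _ _ h => h.symm⟩
    refine Set.pairwise_union_of_symm.2 ⟨hs.1, ht, fun x hx y hy hxy => ?_⟩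
    by_cases hxS : x ∈ S
    · obtain ⟨y, -, rfl⟩ := hy
      exact hW y y.2 x hxS
    · exact ht ⟨⟨x, hsW ⟨hx, hxS⟩⟩, hst hx, rfl⟩ hy hxy
  have hts : Subtype.val '' t ⊆ s := by
    rw [hs.2 _ hunion Set.subset_union_left]
    exact Set.subset_union_right
  exact hst.antisymm fun x hx => hts ⟨x, hx, rfl⟩

lemma ncard_maxClique_le_numMaxCliques_induce [Finite V] (hW : ∀ x ∈ W, ∀ y ∈ S, G.Adj y x) :
    {s | MaxClique G s ∧ S ⊆ s ∧ s \ S ⊆ W}.ncard ≤ numMaxCliques (G.induce W) := by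
  rw [numMaxCliques, ← Nat.card_coe_set_eq]
  refine Set.ncard_le_ncard_of_injOn (fun s => Subtype.val ⁻¹' s)
    (fun _ ⟨hs, _, hsW⟩ => hs.preimage_val_induce hW hsW) ?_ (Set.toFinite _)
  have hrecover : ∀ s : Set V, S ⊆ s → s \ S ⊆ W →
      S ∪ Subtype.val '' (Subtype.val ⁻¹' s : Set W) = s := by
    intro s hSs hsW
    rw [Subtype.image_preimage_coe]
    refine (Set.union_subset hSs Set.inter_subset_right).antisymm fun x hx => ?_
    by_cases hxS : x ∈ S
    · exact Or.inl hxS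
    · exact Or.inr ⟨hsW ⟨hx, hxS⟩, hx⟩
  intro s ⟨_, hSs, hsW⟩ s' ⟨_, hSs', hsW'⟩ h
  rw [← hrecover s hSs hsW, ← hrecover s' hSs' hsW']
  simp only at h
  rw [h]

end Restrict

lemma card_commonNeighbors_le {V : Type*} [Finite V] (G : SimpleGraph V) {u v : V} (huv : u ≠ v) :
    Nat.card (G.commonNeighbors u v) ≤ Nat.card V - 2 := by
  rw [Nat.card_coe_set_eq, ← Set.ncard_pair huv, ← Set.ncard_compl]
  refine Set.ncard_le_ncard fun x hx => ?_
  rintro (rfl | rfl)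
  exacts [G.notMem_commonNeighbors_left x v hx, G.notMem_commonNeighbors_right u x hx]

section AddEdge
variable {V : Type*} {G : SimpleGraph V} {u v : V} {s : Set V}

-- `addEdge G u v` is definitionally `G ⊔ edge u v`, so Mathlib's `sup_edge` lemmas apply to it.
lemma addEdge_comm : addEdge G u v = addEdge G v u :=
  congrArg (G ⊔ ·) (edge_comm u v)

lemma SimpleGraph.IsClique.of_addEdge (hs : (addEdge G u v).IsClique s) (h : u ∉ s ∨ v ∉ s) :
    G.IsClique s := by
  rcases h with hu | hv
  · simpa [Set.sdiff_singleton_eq_self hu] using hs.sdiff_of_sup_edge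
  · rw [addEdge_comm] at hs
    simpa [Set.sdiff_singleton_eq_self hv] using hs.sdiff_of_sup_edge

lemma MaxClique.of_addEdge (hs : MaxClique (addEdge G u v) s) (h : u ∉ s ∨ v ∉ s) :
    MaxClique G s :=
  ⟨hs.1.of_addEdge h, fun t ht hst => hs.2 t (ht.mono le_sup_left) hst⟩

lemma SimpleGraph.IsClique.diff_subset_commonNeighbors (hs : G.IsClique s) (hu : u ∈ s)
    (hv : v ∈ s) : s \ {u, v} ⊆ G.commonNeighbors u v := fun x ⟨hx, hxuv⟩ => by
  simp only [Set.mem_insert_iff, Set.mem_singleton_iff, not_or] at hxuv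
  exact G.mem_commonNeighbors.2 ⟨hs hu hx (Ne.symm hxuv.1), hs hv hx (Ne.symm hxuv.2)⟩

lemma diff_subset_commonNeighbors_of_isClique_addEdge (huv : u ≠ v) (hs : G.IsClique s)
    (hu : u ∈ s) (hv : v ∉ s) (hins : (addEdge G u v).IsClique (insert v s)) :
    s \ {u} ⊆ G.commonNeighbors u v := fun _ ⟨hx, hxu⟩ =>
  G.mem_commonNeighbors.2 ⟨hs hu hx (Ne.symm hxu), hins.sdiff_of_sup_edge
    ⟨Set.mem_insert v s, Ne.symm huv⟩ ⟨Set.mem_insert_of_mem v hx, hxu⟩ fun h => hv (h ▸ hx)⟩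

lemma MaxClique.diff_subset_commonNeighbors_of_not_maxClique_addEdge (huv : u ≠ v)
    (hne : ¬G.Adj u v) (hs : MaxClique G s) (hs' : ¬MaxClique (addEdge G u v) s) :
    (u ∈ s ∧ s \ {u} ⊆ G.commonNeighbors u v) ∨ (v ∈ s ∧ s \ {v} ⊆ G.commonNeighbors v u) := by
  obtain ⟨t, ht, hst, hne_st⟩ : ∃ t, (addEdge G u v).IsClique t ∧ s ⊆ t ∧ s ≠ t := by
    by_contra! h
    exact hs' ⟨hs.1.mono le_sup_left, h⟩
  obtain ⟨x, hxt, hxs⟩ := Set.exists_of_ssubset (hst.ssubset_of_ne hne_st)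
  have hins : (addEdge G u v).IsClique (insert x s) := ht.subset (Set.insert_subset hxt hst)
  -- only the new edge can keep `insert x s` from being a clique of `G`
  have hnotG : ¬G.IsClique (insert x s) := fun h =>
    hxs ((hs.2 _ h (Set.subset_insert x s)) ▸ Set.mem_insert x s)
  have hu : u ∈ insert x s := by_contra fun h => hnotG (hins.of_addEdge (Or.inl h))
  have hv : v ∈ insert x s := by_contra fun h => hnotG (hins.of_addEdge (Or.inr h))
  rcases hu with rfl | hu
  · rcases hv with rfl | hv
    · exact absurd rfl huv
    refine Or.inr ⟨hv, diff_subset_commonNeighbors_of_isClique_addEdge huv.symm hs.1 hv hxs ?_⟩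
    rwa [addEdge_comm]
  · rcases hv with rfl | hv
    · exact Or.inl ⟨hu, diff_subset_commonNeighbors_of_isClique_addEdge huv hs.1 hu hxs hins⟩
    · exact absurd (hs.1 hu hv huv) hne

end AddEdge

lemma ncard_maxClique_le_maxNumMaxCliques {V : Type*} [Fintype V] {G : SimpleGraph V} {u v : V}
    (huv : u ≠ v) {S : Set V} (hS : ∀ x ∈ G.commonNeighbors u v, ∀ y ∈ S, G.Adj y x) :
    {s | MaxClique G s ∧ S ⊆ s ∧ s \ S ⊆ G.commonNeighbors u v}.ncard ≤
      maxNumMaxCliques (Fintype.card V - 2) :=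
  (ncard_maxClique_le_numMaxCliques_induce hS).trans <| numMaxCliques_le_maxNumMaxCliques _ <|
    Nat.card_eq_fintype_card (α := V) ▸ card_commonNeighbors_le G huv

lemma symmDiff_maxClique_addEdge_subset {V : Type*} {G : SimpleGraph V} {u v : V} (huv : u ≠ v)
    (hne : ¬G.Adj u v) :
    symmDiff {s | MaxClique G s} {s | MaxClique (addEdge G u v) s} ⊆
      {s | MaxClique (addEdge G u v) s ∧ {u, v} ⊆ s ∧
          s \ {u, v} ⊆ (addEdge G u v).commonNeighbors u v} ∪
        {s | MaxClique G s ∧ {u} ⊆ s ∧ s \ {u} ⊆ G.commonNeighbors u v} ∪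
        {s | MaxClique G s ∧ {v} ⊆ s ∧ s \ {v} ⊆ G.commonNeighbors v u} := by
  rintro s (⟨hs, hs'⟩ | ⟨hs', hs⟩)
  · rcases hs.diff_subset_commonNeighbors_of_not_maxClique_addEdge huv hne hs' with h | h
    · exact Or.inl (Or.inr ⟨hs, Set.singleton_subset_iff.2 h.1, h.2⟩)
    · exact Or.inr ⟨hs, Set.singleton_subset_iff.2 h.1, h.2⟩
  · have huv_mem : u ∈ s ∧ v ∈ s := by
      by_contra h
      exact hs (hs'.of_addEdge (not_and_or.1 h))
    exact Or.inl (Or.inl ⟨hs', Set.insert_subset huv_mem.1 (Set.singleton_subset_iff.2 huv_mem.2),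
      hs'.1.diff_subset_commonNeighbors huv_mem.1 huv_mem.2⟩)

theorem stmt_4_general {V : Type*} [Fintype V]
    (G : SimpleGraph V) (u v : V) (huv : u ≠ v) (hne : ¬ G.Adj u v) :
    Nat.card ↥(symmDiff {s : Set V | MaxClique G s} {s : Set V | MaxClique (addEdge G u v) s}) ≤
      3 * maxNumMaxCliques (Fintype.card V - 2) := by
  have hA := ncard_maxClique_le_maxNumMaxCliques (G := addEdge G u v) huv (S := {u, v})
    fun x hx y hy => by
      rcases hy with rfl | rfl
      exacts [hx.1, hx.2]
  have hB := ncard_maxClique_le_maxNumMaxCliques (G := G) huv (S := {u})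
    fun x hx y hy => hy ▸ hx.1
  have hC := ncard_maxClique_le_maxNumMaxCliques (G := G) huv.symm (S := {v})
    fun x hx y hy => hy ▸ hx.1
  calc _ = _ := Nat.card_coe_set_eq _
    _ ≤ _ := Set.ncard_le_ncard (symmDiff_maxClique_addEdge_subset huv hne)
    _ ≤ _ := (Set.ncard_union_le _ _).trans (Nat.add_le_add_right (Set.ncard_union_le _ _) _)
    _ ≤ 3 * maxNumMaxCliques (Fintype.card V - 2) := by omega

theorem stmt_4 {V : Type*} [Fintype V] (hn : 2 < Fintype.card V)
    (G : SimpleGraph V) (u v : V) (huv : u ≠ v) (hne : ¬ G.Adj u v) :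
    Nat.card ↥(symmDiff {s : Set V | MaxClique G s} {s : Set V | MaxClique (addEdge G u v) s}) ≤
      3 * maxNumMaxCliques (Fintype.card V - 2) :=
  stmt_4_general G u v huv hne
end

section
/- For every integer n > 2 there exists a graph G on n vertices and an edge e ∉ E(G) such that the symmetric difference of the sets of maximal cliques of G and G+e has size exactly 3·f(n-2): namely, let G consist of a Moon–Moser graph G' on n-2 vertices plus two vertices a, b each adjacent to all of V(G'), with a and b mutually non-adjacent, and e = (a,b). Then G has 2·f(n-2) maximal cliques, G+e has f(n-2) maximal cliques, and the two clique sets are disjoint. -/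
/-
Let `G'` be a graph on `n - 2` vertices with the maximum number `f(n - 2)` of maximal cliques
(a Moon–Moser graph). Take `G` to be the join of `G'` with two non-adjacent vertices `a, b`, so
that `G + ab` is the join of `G'` with an edge. The maximal cliques of a join `G₁ ∨ G₂` are exactly
the unions of a maximal clique of `G₁` with one of `G₂`. Hence `G` has `2 f(n - 2)` maximal
cliques (each meets `{a, b}` in one point), `G + ab` has `f(n - 2)` (each contains `{a, b}`), and
no clique is maximal in both, as the traces on `{a, b}` differ.
-/

open SimpleGraph

section Order

variable {α β : Type*} [Preorder α] [Preorder β]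

theorem OrderIso.maximal_apply_iff (e : α ≃o β) {P : β → Prop} {x : α} :
    Maximal P (e x) ↔ Maximal (P ∘ e) x :=
  e.toOrderEmbedding.maximal_apply_mem_iff (t := Set.ofPred P) (by simp)

theorem maximal_prodMk_iff {P : α → Prop} {Q : β → Prop} {a : α} {b : β} :
    Maximal (fun p : α × β => P p.1 ∧ Q p.2) (a, b) ↔ Maximal P a ∧ Maximal Q b := by
  constructor
  · rintro ⟨⟨ha, hb⟩, hmax⟩
    exact ⟨⟨ha, fun a' ha' hle =>
        (hmax (y := (a', b)) ⟨ha', hb⟩ (Prod.mk_le_mk.2 ⟨hle, le_rfl⟩)).1⟩,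
      ⟨hb, fun b' hb' hle =>
        (hmax (y := (a, b')) ⟨ha, hb'⟩ (Prod.mk_le_mk.2 ⟨le_rfl, hle⟩)).2⟩⟩
  · rintro ⟨ha, hb⟩
    exact ⟨⟨ha.prop, hb.prop⟩, fun p hp hle => Prod.mk_le_mk.2 ⟨ha.2 hp.1 hle.1, hb.2 hp.2 hle.2⟩⟩

end Order

namespace SimpleGraph

variable {V W : Type*}

theorem maxClique_iff_maximal {G : SimpleGraph V} {s : Set V} :
    MaxClique G s ↔ Maximal G.IsClique s := by
  rw [maximal_subset_iff]
  rfl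

theorem isClique_comap_equiv_iff {H : SimpleGraph W} (f : V ≃ W) {s : Set V} :
    (H.comap f).IsClique s ↔ H.IsClique (f '' s) :=
  f.injective.injOn.pairwise_image.symm

theorem maxClique_comap_equiv_iff {H : SimpleGraph W} (f : V ≃ W) {s : Set V} :
    MaxClique (H.comap f) s ↔ MaxClique H (f '' s) := by
  simp only [maxClique_iff_maximal]
  rw [← f.toOrderIsoSet_apply, f.toOrderIsoSet.maximal_apply_iff]
  congr! 1
  exact funext fun t => propext (isClique_comap_equiv_iff f)

theorem numMaxCliques_comap_equiv (H : SimpleGraph W) (f : V ≃ W) :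
    numMaxCliques (H.comap f) = numMaxCliques H :=
  Nat.card_congr <| Equiv.subtypeEquiv f.toOrderIsoSet.toEquiv fun _ => maxClique_comap_equiv_iff f

theorem disjoint_maxCliques_comap_equiv {H₁ H₂ : SimpleGraph W} (f : V ≃ W)
    (h : Disjoint {s | MaxClique H₁ s} {s | MaxClique H₂ s}) :
    Disjoint {s | MaxClique (H₁.comap f) s} {s | MaxClique (H₂.comap f) s} :=
  Set.disjoint_left.2 fun _ h₁ h₂ =>
    Set.disjoint_left.1 h ((maxClique_comap_equiv_iff f).1 h₁) ((maxClique_comap_equiv_iff f).1 h₂)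

theorem addEdge_comap_equiv (H : SimpleGraph W) (f : V ≃ W) (u v : V) :
    addEdge (H.comap f) u v = (addEdge H (f u) (f v)).comap f := by
  ext x y
  simp [addEdge]

def join (G : SimpleGraph V) (H : SimpleGraph W) : SimpleGraph (V ⊕ W) where
  Adj
    | .inl u, .inl v => G.Adj u v
    | .inr u, .inr v => H.Adj u v
    | _, _ => True
  symm := ⟨by
    rintro (u | u) (v | v) h
    exacts [h.symm, trivial, trivial, h.symm]⟩
  loopless := ⟨by
    rintro (u | u) h
    exacts [G.irrefl h, H.irrefl h]⟩

variable {G : SimpleGraph V} {H : SimpleGraph W}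

@[simp] theorem join_adj_inl_inl {u v : V} : (join G H).Adj (.inl u) (.inl v) ↔ G.Adj u v := .rfl
@[simp] theorem join_adj_inr_inr {u v : W} : (join G H).Adj (.inr u) (.inr v) ↔ H.Adj u v := .rfl
@[simp] theorem join_adj_inl_inr {u : V} {v : W} : (join G H).Adj (.inl u) (.inr v) := trivial
@[simp] theorem join_adj_inr_inl {u : W} {v : V} : (join G H).Adj (.inr u) (.inl v) := trivial

theorem isClique_join_iff {s : Set (V ⊕ W)} :
    (join G H).IsClique s ↔ G.IsClique (Sum.inl ⁻¹' s) ∧ H.IsClique (Sum.inr ⁻¹' s) := by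
  constructor
  · intro h
    exact ⟨fun u hu v hv huv => h hu hv (Sum.inl_injective.ne huv),
      fun u hu v hv huv => h hu hv (Sum.inr_injective.ne huv)⟩
  · rintro ⟨hG, hH⟩ (u | u) hu (v | v) hv huv
    exacts [hG hu hv (ne_of_apply_ne _ huv), trivial, trivial, hH hu hv (ne_of_apply_ne _ huv)]

theorem maxClique_join_iff {s : Set (V ⊕ W)} :
    MaxClique (join G H) s ↔ MaxClique G (Sum.inl ⁻¹' s) ∧ MaxClique H (Sum.inr ⁻¹' s) := by
  simp only [maxClique_iff_maximal]
  have hclique : (join G H).IsClique ∘ Set.sumEquiv.symm =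
      fun p : Set V × Set W => G.IsClique p.1 ∧ H.IsClique p.2 := by
    ext p
    simp [isClique_join_iff, Set.preimage_image_eq _ Sum.inl_injective,
      Set.preimage_image_eq _ Sum.inr_injective]
  rw [← maximal_prodMk_iff, ← hclique, ← Set.sumEquiv_apply,
    ← Set.sumEquiv.symm.maximal_apply_iff, OrderIso.symm_apply_apply]

theorem numMaxCliques_join : numMaxCliques (join G H) = numMaxCliques G * numMaxCliques H := by
  rw [numMaxCliques, numMaxCliques, numMaxCliques, ← Nat.card_prod]
  exact Nat.card_congr <|
    (Equiv.subtypeEquiv Set.sumEquiv.toEquiv fun _ => maxClique_join_iff).trans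
      Equiv.subtypeProdEquivProd

theorem disjoint_maxCliques_join {H₁ H₂ : SimpleGraph W}
    (h : Disjoint {s | MaxClique H₁ s} {s | MaxClique H₂ s}) :
    Disjoint {s | MaxClique (join G H₁) s} {s | MaxClique (join G H₂) s} :=
  Set.disjoint_left.2 fun _ h₁ h₂ =>
    Set.disjoint_left.1 h (maxClique_join_iff.1 h₁).2 (maxClique_join_iff.1 h₂).2

theorem addEdge_join_inr (a b : W) :
    addEdge (join G H) (.inr a) (.inr b) = join G (addEdge H a b) := by
  ext (u | u) (v | v) <;> simp [addEdge]

theorem maxClique_bot_iff [Nonempty V] {s : Set V} :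
    MaxClique (⊥ : SimpleGraph V) s ↔ ∃ v, s = {v} := by
  constructor
  · rintro ⟨hs, hmax⟩
    rcases (isClique_bot_iff.1 hs).eq_empty_or_singleton with rfl | hv
    · obtain ⟨v⟩ := ‹Nonempty V›
      exact ⟨v, hmax {v} (isClique_singleton v) (Set.empty_subset _)⟩
    · exact hv
  · rintro ⟨v, rfl⟩
    exact ⟨isClique_singleton v, fun t ht hvt =>
      ((isClique_bot_iff.1 ht).eq_singleton_of_mem (hvt rfl)).symm⟩

theorem maxClique_top_iff {s : Set V} : MaxClique (⊤ : SimpleGraph V) s ↔ s = Set.univ :=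
  ⟨fun hs => hs.2 _ (IsClique.top _) (Set.subset_univ s),
    by rintro rfl; exact ⟨IsClique.top _, fun t _ h => (Set.univ_subset_iff.1 h).symm⟩⟩

theorem numMaxCliques_bot [Nonempty V] : numMaxCliques (⊥ : SimpleGraph V) = Nat.card V :=
  Nat.card_congr ((Equiv.ofInjective _ Set.singleton_injective).trans
    (Equiv.subtypeEquivRight fun _ => by simp [maxClique_bot_iff, eq_comm])).symm

theorem numMaxCliques_top : numMaxCliques (⊤ : SimpleGraph V) = 1 := by
  simp [numMaxCliques, maxClique_top_iff]

theorem disjoint_maxCliques_bot_top [Nontrivial V] :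
    Disjoint {s | MaxClique (⊥ : SimpleGraph V) s} {s | MaxClique (⊤ : SimpleGraph V) s} := by
  refine Set.disjoint_left.2 fun s hbot htop => ?_
  obtain ⟨v, rfl⟩ := maxClique_bot_iff.1 hbot
  obtain ⟨w, hwv⟩ := exists_ne v
  exact hwv (Set.eq_univ_iff_forall.1 (maxClique_top_iff.1 htop) w)

theorem addEdge_bot_fin_two : addEdge (⊥ : SimpleGraph (Fin 2)) 0 1 = ⊤ := by
  ext u v
  fin_cases u <;> fin_cases v <;> simp [addEdge]

end SimpleGraph

theorem Nat.card_symmDiff_of_disjoint {α : Type*} [Finite α] {s t : Set α} (h : Disjoint s t) :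
    Nat.card ↥(symmDiff s t) = Nat.card s + Nat.card t := by
  rw [h.symmDiff_eq_sup, Nat.card_coe_set_eq, Nat.card_coe_set_eq, Nat.card_coe_set_eq]
  exact Set.ncard_union_eq h

theorem exists_numMaxCliques_eq_maxNumMaxCliques (k : ℕ) :
    ∃ G : SimpleGraph (Fin k), numMaxCliques G = maxNumMaxCliques k := by
  let S := {m | ∃ G : SimpleGraph (Fin k), m = numMaxCliques G}
  have hbdd : BddAbove S := by
    refine ⟨Nat.card (Set (Fin k)), ?_⟩
    rintro _ ⟨G, rfl⟩
    exact Nat.card_le_card_of_injective _ Subtype.val_injective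
  obtain ⟨G, hG⟩ := Nat.sSup_mem (s := S) ⟨_, ⊥, rfl⟩ hbdd
  exact ⟨G, hG.symm⟩

theorem stmt_5 (n : ℕ) (hn : 2 < n) :
    ∃ (G : SimpleGraph (Fin n)) (u v : Fin n), u ≠ v ∧ ¬ G.Adj u v ∧
      numMaxCliques G = 2 * maxNumMaxCliques (n - 2) ∧
      numMaxCliques (addEdge G u v) = maxNumMaxCliques (n - 2) ∧
      Disjoint {s : Set (Fin n) | MaxClique G s} {s : Set (Fin n) | MaxClique (addEdge G u v) s} ∧
      Nat.card ↥(symmDiff {s : Set (Fin n) | MaxClique G s}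
          {s : Set (Fin n) | MaxClique (addEdge G u v) s}) = 3 * maxNumMaxCliques (n - 2) := by
  obtain ⟨k, rfl⟩ : ∃ k, n = k + 2 := ⟨n - 2, by omega⟩
  rw [Nat.add_sub_cancel]
  obtain ⟨G', hG'⟩ := exists_numMaxCliques_eq_maxNumMaxCliques k
  let e : Fin (k + 2) ≃ Fin k ⊕ Fin 2 := finSumFinEquiv.symm
  let u := e.symm (.inr 0)
  let v := e.symm (.inr 1)
  have hadd : addEdge ((join G' ⊥).comap e) u v = (join G' ⊤).comap e := by
    rw [addEdge_comap_equiv, Equiv.apply_symm_apply, Equiv.apply_symm_apply, addEdge_join_inr,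
      addEdge_bot_fin_two]
  have hdisj := disjoint_maxCliques_comap_equiv e
    (disjoint_maxCliques_join (G := G') disjoint_maxCliques_bot_top)
  have hcard₀ : numMaxCliques ((join G' ⊥).comap e) = 2 * maxNumMaxCliques k := by
    rw [numMaxCliques_comap_equiv, numMaxCliques_join, numMaxCliques_bot, hG', Nat.card_fin,
      mul_comm]
  have hcard₁ : numMaxCliques ((join G' ⊤).comap e) = maxNumMaxCliques k := by
    rw [numMaxCliques_comap_equiv, numMaxCliques_join, numMaxCliques_top, hG', mul_one]
  refine ⟨(join G' ⊥).comap e, u, v, by simp [u, v], by simp [u, v], hcard₀, ?_, ?_, ?_⟩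
  · rw [hadd, hcard₁]
  · rwa [hadd]
  · rw [hadd, Nat.card_symmDiff_of_disjoint hdisj]
    change numMaxCliques _ + numMaxCliques _ = _
    rw [hcard₀, hcard₁]
    ring
end

section
/- Let c be a clique (complete graph) on a finite vertex set and H a set of k edges among vertices of c. Then the graph c - H obtained by deleting the edges of H from c has at most 2^k maximal cliques. -/
open SimpleGraph

/-!
A set `S` is a clique of `⊤ - H` iff no edge of `H` lies inside `S`, and it is maximal iff
moreover every vertex outside `S` is joined by an edge of `H` to a vertex of `S`. Fix an endpoint
`out e` of every `e ∈ H`. A maximal clique `S` is determined by the set of `e ∈ H` with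
`out e ∈ S`: if `x ∈ S \ T`, maximality of `T` gives an edge `e = s(x, y) ∈ H` with `y ∈ T`,
so `y ∉ S`, and whichever of `x`, `y` is `out e` lies in exactly one of `S`, `T`.
Hence there are at most `2 ^ |H|` maximal cliques.
-/

section

variable {V : Type*} {H : Set (Sym2 V)}

lemma SimpleGraph.isClique_top_deleteEdges_iff {s : Set V} :
    ((⊤ : SimpleGraph V).deleteEdges H).IsClique s ↔
      ∀ ⦃x⦄, x ∈ s → ∀ ⦃y⦄, y ∈ s → x ≠ y → s(x, y) ∉ H := by
  simp only [IsClique, Set.Pairwise, deleteEdges_adj, top_adj]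
  exact forall₂_congr fun _ _ => forall₂_congr fun _ _ => forall_congr' fun hxy =>
    and_iff_right hxy

lemma MaxClique.exists_edge_of_notMem {T : Set V}
    (hT : MaxClique ((⊤ : SimpleGraph V).deleteEdges H) T) {x : V} (hx : x ∉ T) :
    ∃ y ∈ T, s(x, y) ∈ H := by
  by_contra! hxT
  suffices ((⊤ : SimpleGraph V).deleteEdges H).IsClique (insert x T) from
    hx ((hT.2 _ this (Set.subset_insert x T)).symm ▸ Set.mem_insert x T)
  rw [isClique_top_deleteEdges_iff]
  rintro a (rfl | ha) b (rfl | hb) hab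
  · exact absurd rfl hab
  · exact hxT b hb
  · rw [Sym2.eq_swap]; exact hxT a ha
  · exact isClique_top_deleteEdges_iff.mp hT.1 ha hb hab

lemma MaxClique.subset_of_out_fst_mem_iff {S T : Set V}
    (hS : MaxClique ((⊤ : SimpleGraph V).deleteEdges H) S)
    (hT : MaxClique ((⊤ : SimpleGraph V).deleteEdges H) T)
    (hST : ∀ e ∈ H, e.out.1 ∈ S ↔ e.out.1 ∈ T) : S ⊆ T := by
  intro x hxS
  by_contra hxT
  obtain ⟨y, hyT, hxyH⟩ := hT.exists_edge_of_notMem hxT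
  have hxy : x ≠ y := fun h => hxT (h ▸ hyT)
  have hyS : y ∉ S := fun hyS => isClique_top_deleteEdges_iff.mp hS.1 hxS hyS hxy hxyH
  have hST := hST _ hxyH
  rcases Sym2.mem_iff.mp (Sym2.out_fst_mem s(x, y)) with hout | hout <;> rw [hout] at hST
  · exact hxT (hST.mp hxS)
  · exact hyS (hST.mpr hyT)

lemma maxClique_top_deleteEdges_injective :
    Function.Injective fun S : {S : Set V // MaxClique ((⊤ : SimpleGraph V).deleteEdges H) S} =>
      {e : H | (e : Sym2 V).out.1 ∈ S.1} := by
  rintro ⟨S, hS⟩ ⟨T, hT⟩ hST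
  have hout (e) (he : e ∈ H) : e.out.1 ∈ S ↔ e.out.1 ∈ T :=
    Set.ext_iff.mp hST ⟨e, he⟩
  exact Subtype.ext <| (hS.subset_of_out_fst_mem_iff hT hout).antisymm
    (hT.subset_of_out_fst_mem_iff hS fun e he => (hout e he).symm)

theorem numMaxCliques_top_deleteEdges_le (H : Finset (Sym2 V)) :
    numMaxCliques ((⊤ : SimpleGraph V).deleteEdges ↑H) ≤ 2 ^ H.card := by
  calc numMaxCliques ((⊤ : SimpleGraph V).deleteEdges ↑H)
      ≤ Nat.card (Set (H : Set (Sym2 V))) :=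
        Nat.card_le_card_of_injective _ maxClique_top_deleteEdges_injective
    _ = 2 ^ H.card := by
        simp only [Nat.card_eq_fintype_card, Fintype.card_set, Finset.coe_sort_coe,
          Fintype.card_coe]

end

theorem stmt_8_general {V : Type*} (k : ℕ) (H : Finset (Sym2 V)) (hk : H.card = k) :
    numMaxCliques ((⊤ : SimpleGraph V).deleteEdges ↑H) ≤ 2 ^ k :=
  hk ▸ numMaxCliques_top_deleteEdges_le H

theorem stmt_8 {V : Type*} [Fintype V] (k : ℕ) (H : Finset (Sym2 V))
    (hH : (H : Set (Sym2 V)) ⊆ (⊤ : SimpleGraph V).edgeSet) (hk : H.card = k) :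
    numMaxCliques ((⊤ : SimpleGraph V).deleteEdges ↑H) ≤ 2 ^ k :=
  stmt_8_general k H hk
end

section
/- Let n and ε be integers with 3 < ε < n. Construct G on n vertices as follows: partition V into V₁ of size ε and V₂ of size n-ε; add all edges between V₁ and V₂; make the induced subgraph on V₂ a Moon–Moser graph with f(n-ε) maximal cliques; leave V₁ an independent set. Then G has exactly ε·f(n-ε) maximal cliques. -/
open SimpleGraph

section Aux
variable {V : Type*} {G : SimpleGraph V} {V₁ : Set V}

lemma clique_insert'
    (hcross : ∀ a ∈ V₁, ∀ b ∈ V₁ᶜ, G.Adj a b)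
    {a : V} (ha : a ∈ V₁) {s : Set V} (hsub : s ⊆ V₁ᶜ) (hs : G.IsClique s) :
    G.IsClique (insert a s) := by
  intro x hx y hy hxy
  rcases hx with rfl | hx
  · rcases hy with rfl | hy
    · exact absurd rfl hxy
    · exact hcross x ha y (hsub hy)
  · rcases hy with rfl | hy
    · exact (hcross y ha x (hsub hx)).symm
    · exact hs hx hy hxy

lemma clique_insert
    (hcross : ∀ a ∈ V₁, ∀ b ∈ V₁ᶜ, G.Adj a b)
    {a : V} (ha : a ∈ V₁) {t : Set ↥V₁ᶜ}
    (ht : (G.induce V₁ᶜ).IsClique t) :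
    G.IsClique (insert a ((↑) '' t : Set V)) := by
  refine clique_insert' hcross ha ?_ ?_
  · rintro x ⟨x', _, rfl⟩; exact x'.2
  · rintro x ⟨x', hx', rfl⟩ y ⟨y', hy', rfl⟩ hxy
    exact ht hx' hy' (fun h => hxy (congrArg _ h))

lemma inter_subsingleton
    (hindep : ∀ a ∈ V₁, ∀ b ∈ V₁, ¬ G.Adj a b)
    {s : Set V} (hs : G.IsClique s) : (s ∩ V₁).Subsingleton := by
  intro x hx y hy
  by_contra hne
  exact hindep x hx.2 y hy.2 (hs hx.1 hy.1 hne)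

lemma maxclique_insert
    (hcross : ∀ a ∈ V₁, ∀ b ∈ V₁ᶜ, G.Adj a b)
    (hindep : ∀ a ∈ V₁, ∀ b ∈ V₁, ¬ G.Adj a b)
    {a : V} (ha : a ∈ V₁) {t : Set ↥V₁ᶜ}
    (ht : MaxClique (G.induce V₁ᶜ) t) :
    MaxClique G (insert a ((↑) '' t : Set V)) := by
  refine ⟨clique_insert hcross ha ht.1, ?_⟩
  intro u hu hsub
  refine Set.Subset.antisymm hsub fun x hxu => ?_
  by_cases hx : x ∈ V₁
  · have : x = a := inter_subsingleton hindep hu ⟨hxu, hx⟩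
      ⟨hsub (Set.mem_insert a _), ha⟩
    rw [this]; exact Set.mem_insert a _
  · set t' : Set ↥V₁ᶜ := {y | ↑y ∈ u} with ht'def
    have htt' : t ⊆ t' := fun y hy =>
      hsub (Set.mem_insert_of_mem _ ⟨y, hy, rfl⟩)
    have ht'c : (G.induce V₁ᶜ).IsClique t' := by
      intro p hp q hq hpq
      exact hu hp hq (fun h => hpq (Subtype.ext h))
    have := ht.2 t' ht'c htt'
    have hxt : (⟨x, hx⟩ : ↥V₁ᶜ) ∈ t := this ▸ hxu
    exact Set.mem_insert_of_mem _ ⟨⟨x, hx⟩, hxt, rfl⟩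

lemma exists_rep
    (hcross : ∀ a ∈ V₁, ∀ b ∈ V₁ᶜ, G.Adj a b)
    (hindep : ∀ a ∈ V₁, ∀ b ∈ V₁, ¬ G.Adj a b)
    (hne : V₁.Nonempty) {s : Set V} (hs : MaxClique G s) :
    ∃ a ∈ V₁, ∃ t : Set ↥V₁ᶜ, MaxClique (G.induce V₁ᶜ) t ∧
      s = insert a ((↑) '' t : Set V) := by
  have hint : (s ∩ V₁).Nonempty := by
    by_contra h
    rw [Set.not_nonempty_iff_eq_empty] at h
    obtain ⟨a, ha⟩ := hne
    have hsub : s ⊆ V₁ᶜ := fun x hx hxV =>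
      Set.eq_empty_iff_forall_notMem.mp h x ⟨hx, hxV⟩
    have hcl := clique_insert' hcross ha hsub hs.1
    have := hs.2 _ hcl (Set.subset_insert a s)
    have : a ∈ s := this ▸ Set.mem_insert a s
    exact hsub this ha
  obtain ⟨a, has, haV⟩ := hint
  refine ⟨a, haV, {y : ↥V₁ᶜ | ↑y ∈ s}, ⟨?_, ?_⟩, ?_⟩
  · intro p hp q hq hpq
    exact hs.1 hp hq (fun h => hpq (Subtype.ext h))
  · intro t' ht'c htt'
    have hcl := clique_insert hcross haV ht'c
    have hsub : s ⊆ insert a ((↑) '' t' : Set V) := by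
      intro x hx
      by_cases hxV : x ∈ V₁
      · have : x = a := inter_subsingleton hindep hs.1 ⟨hx, hxV⟩ ⟨has, haV⟩
        rw [this]; exact Set.mem_insert a _
      · exact Set.mem_insert_of_mem _ ⟨⟨x, hxV⟩, htt' hx, rfl⟩
    have heq := hs.2 _ hcl hsub
    refine Set.Subset.antisymm htt' fun y hy => ?_
    show (y : V) ∈ s
    rw [heq]
    exact Set.mem_insert_of_mem _ ⟨y, hy, rfl⟩
  · refine Set.Subset.antisymm (fun x hx => ?_) ?_
    · by_cases hxV : x ∈ V₁
      · have : x = a := inter_subsingleton hindep hs.1 ⟨hx, hxV⟩ ⟨has, haV⟩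
        rw [this]; exact Set.mem_insert a _
      · exact Set.mem_insert_of_mem _ ⟨⟨x, hxV⟩, hx, rfl⟩
    · rintro x (rfl | ⟨y, hy, rfl⟩)
      · exact has
      · exact hy

end Aux

theorem stmt_13 {V : Type*} [Fintype V] (n ε : ℕ) (hn : Fintype.card V = n)
    (hε : 3 < ε) (hεn : ε < n) (G : SimpleGraph V) (V₁ : Set V)
    (hcard : V₁.ncard = ε)
    (hcross : ∀ a ∈ V₁, ∀ b ∈ V₁ᶜ, G.Adj a b)
    (hindep : ∀ a ∈ V₁, ∀ b ∈ V₁, ¬ G.Adj a b)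
    (hMM : numMaxCliques (G.induce V₁ᶜ) = maxNumMaxCliques (n - ε)) :
    numMaxCliques G = ε * maxNumMaxCliques (n - ε) := by
  classical
  have hne : V₁.Nonempty := by
    apply Set.nonempty_of_ncard_ne_zero; omega
  suffices h : numMaxCliques G = ε * numMaxCliques (G.induce V₁ᶜ) by
    rw [h, hMM]
  let F : ↥V₁ × {t : Set ↥V₁ᶜ // MaxClique (G.induce V₁ᶜ) t} →
      {s : Set V // MaxClique G s} :=
    fun p => ⟨insert (p.1 : V) (Subtype.val '' (p.2 : Set ↥V₁ᶜ)), maxclique_insert hcross hindep p.1.2 p.2.2⟩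
  have hF : Function.Bijective F := by
    constructor
    · rintro ⟨⟨a, ha⟩, ⟨t, ht⟩⟩ ⟨⟨b, hb⟩, ⟨u, hu⟩⟩ heq
      have heq' : insert a ((↑) '' t : Set V) = insert b ((↑) '' u : Set V) :=
        congrArg Subtype.val heq
      have hab : a = b := by
        have : a ∈ insert b ((↑) '' u : Set V) := heq' ▸ Set.mem_insert a _
        rcases this with h | ⟨y, _, hy⟩
        · exact h
        · exact absurd (hy ▸ y.2) (not_not_intro ha)
      subst hab
      have htu : t = u := by
        apply Set.Subset.antisymm <;> intro y hy
        · have : (y : V) ∈ insert a ((↑) '' u : Set V) :=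
            heq' ▸ Set.mem_insert_of_mem _ ⟨y, hy, rfl⟩
          rcases this with h | ⟨z, hz, hzy⟩
          · exact absurd (h.symm ▸ ha) y.2
          · exact (Subtype.ext hzy : z = y) ▸ hz
        · have : (y : V) ∈ insert a ((↑) '' t : Set V) :=
            heq'.symm ▸ Set.mem_insert_of_mem _ ⟨y, hy, rfl⟩
          rcases this with h | ⟨z, hz, hzy⟩
          · exact absurd (h.symm ▸ ha) y.2
          · exact (Subtype.ext hzy : z = y) ▸ hz
      subst htu
      rfl
    · rintro ⟨s, hs⟩
      obtain ⟨a, ha, t, ht, hrep⟩ := exists_rep hcross hindep hne hs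
      exact ⟨⟨⟨a, ha⟩, ⟨t, ht⟩⟩, Subtype.ext hrep.symm⟩
  have hcount := Nat.card_congr (Equiv.ofBijective F hF)
  rw [numMaxCliques, ← hcount, Nat.card_prod, Nat.card_coe_set_eq, hcard]
  rfl
end

section
/- For any graph G on n ≥ 1 vertices partitioned as a complete multipartite graph with parts of size 3 (and possibly one part of size 2 or 4 when n is not divisible by 3), the number of maximal cliques equals f(n) = 3^{n/3} if n ≡ 0 mod 3, 4·3^{(n-4)/3} if n ≡ 1 mod 3 (n ≥ 4), and 2·3^{(n-2)/3} if n ≡ 2 mod 3; moreover no n-vertex graph has more maximal cliques than f(n). -/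
open SimpleGraph

/-- The Moon–Moser bound `f(n)`. -/
def mmBound (n : ℕ) : ℕ :=
  if n % 3 = 0 then 3 ^ (n / 3)
  else if n % 3 = 1 then 4 * 3 ^ ((n - 4) / 3)
  else 2 * 3 ^ ((n - 2) / 3)

/-!
Let `v` be a vertex of maximum degree `Δ` in an `n`-vertex graph. Every maximal clique contains a
vertex `u` that is not a neighbour of `v` (possibly `v` itself), and the maximal cliques through `u`
embed, by `s ↦ s ∩ N(u)`, into the maximal cliques of the graph induced on `N(u)`, which has
`deg u ≤ Δ` vertices. By induction there are at most `(n - Δ) f(Δ)` maximal cliques, and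
`(n - Δ) f(Δ) ≤ f(n)` whenever `Δ < n`, since `f(d + 3) = 3 f(d)` for `d ≥ 2`.

In a complete multipartite graph the maximal cliques are the transversals of the parts, so there
are `c · 3 ^ (t - 1)` of them when all parts but one have size 3 and the last has size `c`; for
`c ∈ {2, 3, 4}` this is `f(c + 3 (t - 1))`.
-/

/-- Agrees with `mmBound` except at `n = 1`, where truncated subtraction makes the formula of
`mmBound` give `4 * 3 ^ ((1 - 4) / 3) = 4` instead of `1`. -/
def moonMoser (n : ℕ) : ℕ := if n = 1 then 1 else mmBound n

lemma moonMoser_le_mmBound (n : ℕ) : moonMoser n ≤ mmBound n := by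
  unfold moonMoser
  split_ifs with h
  · subst h; decide
  · rfl

lemma moonMoser_add_three {n : ℕ} (hn : 2 ≤ n) : moonMoser (n + 3) = 3 * moonMoser n := by
  have hmod : (n + 3) % 3 = n % 3 := by omega
  simp only [moonMoser, mmBound, hmod, if_neg (show n + 3 ≠ 1 by omega),
    if_neg (show n ≠ 1 by omega)]
  split_ifs
  · rw [show (n + 3) / 3 = n / 3 + 1 by omega, pow_succ]; ring
  · rw [show (n + 3 - 4) / 3 = (n - 4) / 3 + 1 by omega, pow_succ]; ring
  · rw [show (n + 3 - 2) / 3 = (n - 2) / 3 + 1 by omega, pow_succ]; ring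

lemma mul_moonMoser_le_of_forall_le_four {a m : ℕ}
    (h : ∀ d ≤ 4, a * moonMoser d ≤ moonMoser (d + m)) (d : ℕ) :
    a * moonMoser d ≤ moonMoser (d + m) := by
  induction d using Nat.strong_induction_on with
  | _ d ih =>
    by_cases hd : d ≤ 4
    · exact h d hd
    obtain ⟨e, rfl⟩ : ∃ e, d = e + 3 := ⟨d - 3, by omega⟩
    rw [moonMoser_add_three (by omega), show e + 3 + m = e + m + 3 by omega,
      moonMoser_add_three (by omega), mul_left_comm]
    exact Nat.mul_le_mul_left 3 (ih e (by omega))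

theorem mul_moonMoser_le {m : ℕ} (hm : 1 ≤ m) (d : ℕ) :
    m * moonMoser d ≤ moonMoser (d + m) := by
  induction m using Nat.strong_induction_on generalizing d with
  | _ m ih =>
    by_cases hm4 : m ≤ 4
    · refine mul_moonMoser_le_of_forall_le_four (fun d hd => ?_) d
      interval_cases m <;> interval_cases d <;> decide
    calc m * moonMoser d ≤ 3 * ((m - 3) * moonMoser d) := by
          rw [← mul_assoc]; exact Nat.mul_le_mul_right _ (by omega)
      _ ≤ 3 * moonMoser (d + (m - 3)) :=
          Nat.mul_le_mul_left 3 (ih (m - 3) (by omega) (by omega) d)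
      _ = moonMoser (d + m) := by
          rw [← moonMoser_add_three (by omega), show d + (m - 3) + 3 = d + m by omega]

lemma moonMoser_mono : Monotone moonMoser :=
  monotone_nat_of_le_succ fun n => by simpa using mul_moonMoser_le le_rfl n

section MaxClique

variable {V : Type*} {G : SimpleGraph V} {s : Set V}

lemma MaxClique.exists_mem_not_mem_neighborSet (hs : MaxClique G s) (v : V) :
    ∃ u ∈ s, u ∉ G.neighborSet v := by
  by_contra! h
  have hv : v ∈ s := by
    rw [hs.2 _ (hs.1.insert fun u hu _ => h u hu) (Set.subset_insert v s)]
    exact Set.mem_insert v s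
  exact G.irrefl (h v hv)

lemma MaxClique.preimage_neighborSet (hs : MaxClique G s) {u : V} (hu : u ∈ s) :
    MaxClique (G.induce (G.neighborSet u)) (Subtype.val ⁻¹' s) := by
  refine ⟨fun a ha b hb hab => hs.1 ha hb (Subtype.coe_injective.ne hab), fun t ht hst => ?_⟩
  have hsub : s ⊆ insert u (Subtype.val '' t) := fun x hx =>
    (eq_or_ne x u).imp id fun hxu => ⟨⟨x, hs.1 hu hx hxu.symm⟩, hst hx, rfl⟩
  have hclique : G.IsClique (insert u (Subtype.val '' t)) := by
    refine (isClique_induce_iff.mp ht).insert ?_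
    rintro _ ⟨a, -, rfl⟩ -
    exact a.2
  have hs_eq := hs.2 _ hclique hsub
  refine hst.antisymm fun a ha => ?_
  show (a : V) ∈ s
  rw [hs_eq]
  exact Set.mem_insert_of_mem _ ⟨a, ha, rfl⟩

lemma card_maxClique_mem_le_numMaxCliques_induce [Finite V] (u : V) :
    Nat.card {s : Set V // MaxClique G s ∧ u ∈ s} ≤
      numMaxCliques (G.induce (G.neighborSet u)) := by
  refine Nat.card_le_card_of_injective (fun s => ⟨_, s.2.1.preimage_neighborSet s.2.2⟩) ?_
  rintro ⟨s₁, hs₁, hu₁⟩ ⟨s₂, hs₂, hu₂⟩ h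
  have hinter : s₁ ∩ G.neighborSet u = s₂ ∩ G.neighborSet u := by
    rw [Set.inter_comm, ← Subtype.image_preimage_coe, Set.inter_comm,
      ← Subtype.image_preimage_coe]
    exact congrArg (Subtype.val '' ·) (congrArg Subtype.val h)
  have hdet : ∀ s, G.IsClique s → u ∈ s → s = insert u (s ∩ G.neighborSet u) :=
    fun s hs hu =>
    Set.Subset.antisymm (fun x hx => (eq_or_ne x u).imp id fun hxu => ⟨hx, hs hu hx hxu.symm⟩)
      (Set.insert_subset hu Set.inter_subset_left)
  exact Subtype.ext <| (hdet s₁ hs₁.1 hu₁).trans <| hinter ▸ (hdet s₂ hs₂.1 hu₂).symm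

end MaxClique

open Finset in
lemma numMaxCliques_le_sum_induce_neighborSet {V : Type*} [Fintype V] [DecidableEq V]
    (G : SimpleGraph V) [DecidableRel G.Adj] (v : V) :
    numMaxCliques G ≤
      ∑ u ∈ (G.neighborFinset v)ᶜ, numMaxCliques (G.induce (G.neighborSet u)) := by
  classical
  calc numMaxCliques G = #{s | MaxClique G s} := by
        rw [numMaxCliques, Nat.card_eq_fintype_card, Fintype.card_subtype]
    _ ≤ #((G.neighborFinset v)ᶜ.biUnion fun u => {s | MaxClique G s ∧ u ∈ s}) := by
        refine card_le_card fun s hs => ?_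
        obtain ⟨u, hus, hu⟩ := (mem_filter.mp hs).2.exists_mem_not_mem_neighborSet v
        exact mem_biUnion.mpr
          ⟨u, by simpa using hu, mem_filter.mpr ⟨mem_univ s, (mem_filter.mp hs).2, hus⟩⟩
    _ ≤ ∑ u ∈ (G.neighborFinset v)ᶜ, #{s | MaxClique G s ∧ u ∈ s} := card_biUnion_le
    _ ≤ _ := sum_le_sum fun u _ => by
        rw [← Fintype.card_subtype, ← Nat.card_eq_fintype_card]
        exact card_maxClique_mem_le_numMaxCliques_induce u

theorem numMaxCliques_le_moonMoser {V : Type*} [Fintype V] (G : SimpleGraph V) :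
    numMaxCliques G ≤ moonMoser (Fintype.card V) := by
  induction h : Fintype.card V using Nat.strong_induction_on generalizing V with
  | _ n ih =>
  classical
  rcases isEmpty_or_nonempty V with hV | hV
  · subst h
    simpa [numMaxCliques, moonMoser, mmBound] using
      Finite.card_le_one_iff_subsingleton.mpr
        (inferInstance : Subsingleton {s : Set V // MaxClique G s})
  obtain ⟨v, hv⟩ := G.exists_maximal_degree_vertex
  have hdeg (u : V) : numMaxCliques (G.induce (G.neighborSet u)) ≤ moonMoser (G.degree v) :=
    (ih _ (h ▸ G.degree_lt_card_verts u) (G.induce _)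
      (by convert G.card_neighborSet_eq_degree u)).trans
      (moonMoser_mono (hv ▸ G.degree_le_maxDegree u))
  calc numMaxCliques G
      ≤ ∑ u ∈ (G.neighborFinset v)ᶜ, numMaxCliques (G.induce (G.neighborSet u)) :=
        numMaxCliques_le_sum_induce_neighborSet G v
    _ ≤ (n - G.degree v) * moonMoser (G.degree v) := by
        simpa [Finset.card_compl, h] using
          Finset.sum_le_card_nsmul (G.neighborFinset v)ᶜ _ _ fun u _ => hdeg u
    _ ≤ moonMoser n := by
        simpa [← h, Nat.add_sub_cancel' (G.degree_lt_card_verts v).le] using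
          mul_moonMoser_le (Nat.sub_pos_of_lt (G.degree_lt_card_verts v)) (G.degree v)

section Multipartite

variable {V ι : Type*} {p : V → ι}

lemma bijOn_range_sections (g : ∀ i, {x : V // p x = i}) :
    (Set.range fun i => (g i).1).BijOn p Set.univ := by
  refine ⟨Set.mapsTo_univ _ _, ?_, fun i _ => ⟨(g i).1, ⟨i, rfl⟩, (g i).2⟩⟩
  rintro _ ⟨i, rfl⟩ _ ⟨j, rfl⟩ h
  rw [(g i).2, (g j).2] at h
  subst h
  rfl

lemma card_bijOn_univ_eq_prod [Fintype ι] :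
    Nat.card {s : Set V // s.BijOn p Set.univ} = ∏ i, Nat.card {x : V // p x = i} := by
  let F (g : ∀ i, {x : V // p x = i}) : {s : Set V // s.BijOn p Set.univ} :=
    ⟨_, bijOn_range_sections g⟩
  have hinj : F.Injective := by
    intro g₁ g₂ h
    funext i
    have hrange : (Set.range fun i => (g₁ i).1) = Set.range fun i => (g₂ i).1 :=
      congrArg Subtype.val h
    obtain ⟨j, hj⟩ : (g₁ i).1 ∈ Set.range fun i => (g₂ i).1 := hrange ▸ ⟨i, rfl⟩
    simp only at hj
    obtain rfl : j = i := by rw [← (g₂ j).2, hj, (g₁ i).2]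
    exact Subtype.ext hj.symm
  have hsurj : F.Surjective := by
    rintro ⟨s, hs⟩
    choose x hxs hx using fun i => hs.surjOn (Set.mem_univ i)
    refine ⟨fun i => ⟨x i, hx i⟩, Subtype.ext ?_⟩
    refine (Set.range_subset_iff.mpr hxs).antisymm fun y hy => ⟨p y, ?_⟩
    exact hs.injOn (hxs (p y)) hy (hx (p y))
  rw [← Nat.card_pi, Nat.card_congr (Equiv.ofBijective F ⟨hinj, hsurj⟩)]

variable {G : SimpleGraph V}

lemma isClique_iff_injOn_of_adj_iff (hAdj : ∀ a b, G.Adj a b ↔ p a ≠ p b) {s : Set V} :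
    G.IsClique s ↔ s.InjOn p := by
  refine ⟨fun hs x hx y hy hxy => ?_, fun hs x hx y hy hxy => (hAdj x y).mpr (hs.ne hx hy hxy)⟩
  by_contra hne
  exact (hAdj x y).mp (hs hx hy hne) hxy

lemma maxClique_iff_bijOn_of_adj_iff (hAdj : ∀ a b, G.Adj a b ↔ p a ≠ p b)
    (hp : p.Surjective) {s : Set V} : MaxClique G s ↔ s.BijOn p Set.univ := by
  simp only [MaxClique, isClique_iff_injOn_of_adj_iff hAdj]
  constructor
  · rintro ⟨hinj, hmax⟩
    refine ⟨Set.mapsTo_univ _ _, hinj, fun i _ => ?_⟩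
    by_contra hi
    obtain ⟨y, rfl⟩ := hp i
    have hs := hmax _ (Set.injOn_insert (fun hy => hi ⟨y, hy, rfl⟩) |>.mpr ⟨hinj, hi⟩)
      (Set.subset_insert y s)
    exact hi ⟨y, hs ▸ Set.mem_insert y s, rfl⟩
  · rintro ⟨-, hinj, hsurj⟩
    refine ⟨hinj, fun t ht hst => hst.antisymm fun x hx => ?_⟩
    obtain ⟨y, hy, hxy⟩ := hsurj (Set.mem_univ (p x))
    rwa [ht (hst hy) hx hxy] at hy

lemma numMaxCliques_eq_prod_of_adj_iff [Fintype ι] (hAdj : ∀ a b, G.Adj a b ↔ p a ≠ p b)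
    (hp : p.Surjective) : numMaxCliques G = ∏ i, Nat.card {x : V // p x = i} := by
  rw [numMaxCliques, ← card_bijOn_univ_eq_prod]
  exact Nat.card_congr (Equiv.subtypeEquivRight fun s => maxClique_iff_bijOn_of_adj_iff hAdj hp)

end Multipartite

@[to_additive]
lemma Fintype.prod_eq_mul_pow_of_forall_ne {ι M : Type*} [Fintype ι] [DecidableEq ι]
    [CommMonoid M] {f : ι → M} {j : ι} {c : M} (h : ∀ i, i ≠ j → f i = c) :
    ∏ i, f i = f j * c ^ (Fintype.card ι - 1) := by
  rw [Fintype.prod_eq_mul_prod_compl j, Finset.prod_congr rfl fun i hi => h i (by simpa using hi),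
    Finset.prod_const, Finset.card_compl, Finset.card_singleton]

lemma mmBound_add_three_mul {c : ℕ} (hc : c = 2 ∨ c = 3 ∨ c = 4) (k : ℕ) :
    mmBound (c + 3 * k) = c * 3 ^ k := by
  rcases hc with rfl | rfl | rfl
  · rw [mmBound, if_neg (by omega), if_neg (by omega), show (2 + 3 * k - 2) / 3 = k by omega]
  · rw [mmBound, if_pos (by omega), show (3 + 3 * k) / 3 = k + 1 by omega, pow_succ']
  · rw [mmBound, if_neg (by omega), if_pos (by omega), show (4 + 3 * k - 4) / 3 = k by omega]

theorem stmt_19_general {V : Type*} [Fintype V]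
    (t : ℕ) (p : V → Fin t)
    (G : SimpleGraph V) (hAdj : ∀ a b : V, G.Adj a b ↔ p a ≠ p b)
    (hsizes : ∃ j : Fin t, (∀ i : Fin t, i ≠ j → Nat.card {x : V // p x = i} = 3) ∧
      (Nat.card {x : V // p x = j} = 3 ∨
        ((Fintype.card V) % 3 ≠ 0 ∧
          (Nat.card {x : V // p x = j} = 2 ∨ Nat.card {x : V // p x = j} = 4)))) :
    numMaxCliques G = mmBound (Fintype.card V) ∧
    ∀ G' : SimpleGraph V, numMaxCliques G' ≤ mmBound (Fintype.card V) := by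
  refine ⟨?_, fun G' => (numMaxCliques_le_moonMoser G').trans (moonMoser_le_mmBound _)⟩
  obtain ⟨j, hsize, hsize_j⟩ := hsizes
  have hsize_j' : Nat.card {x // p x = j} = 2 ∨ Nat.card {x // p x = j} = 3 ∨
      Nat.card {x // p x = j} = 4 := by omega
  have hp : p.Surjective := fun i => by
    have : 0 < Nat.card {x // p x = i} := by
      rcases eq_or_ne i j with rfl | hij
      · omega
      · rw [hsize i hij]; norm_num
    obtain ⟨⟨x, hx⟩⟩ := Nat.card_pos_iff.mp this |>.1
    exact ⟨x, hx⟩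
  have hcard : Fintype.card V = Nat.card {x // p x = j} + 3 * (t - 1) := by
    rw [← Nat.card_eq_fintype_card, ← Nat.card_congr (Equiv.sigmaFiberEquiv p), Nat.card_sigma,
      Fintype.sum_eq_add_nsmul_of_forall_ne hsize, Fintype.card_fin, smul_eq_mul, mul_comm]
  rw [numMaxCliques_eq_prod_of_adj_iff hAdj hp, Fintype.prod_eq_mul_pow_of_forall_ne hsize,
    hcard, mmBound_add_three_mul hsize_j', Fintype.card_fin]

theorem stmt_19 {V : Type*} [Fintype V] (hn : 1 ≤ Fintype.card V)
    (t : ℕ) (p : V → Fin t)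
    (G : SimpleGraph V) (hAdj : ∀ a b : V, G.Adj a b ↔ p a ≠ p b)
    (hsizes : ∃ j : Fin t, (∀ i : Fin t, i ≠ j → Nat.card {x : V // p x = i} = 3) ∧
      (Nat.card {x : V // p x = j} = 3 ∨
        ((Fintype.card V) % 3 ≠ 0 ∧
          (Nat.card {x : V // p x = j} = 2 ∨ Nat.card {x : V // p x = j} = 4)))) :
    numMaxCliques G = mmBound (Fintype.card V) ∧
    ∀ G' : SimpleGraph V, numMaxCliques G' ≤ mmBound (Fintype.card V) :=
  stmt_19_general t p G hAdj hsizes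
end
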